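/- Let m = 2p ≥ 2 be an even integer, ζ := exp(πi/m), and let Ŵ⁺ be the group with presentation ⟨z, s₀, s₁, s_m | z² = s₀² = s₁² = s_m² = 1, (s₀s₁)² = (s₀s_m)² = (s₁s_m)^m = z, z s_i = s_i z for i ∈ {0,1,m}⟩. For δ ∈ {1, −1} and 1 ≤ j ≤ m − 1, the assignment z ↦ (−1)^j·I₂, s₀ ↦ diag(δ, (−1)^j δ), s₁ ↦ [[0, ζ^{j}], [ζ^{−j}, 0]], s_m ↦ [[0,1],[1,0]] respects the defining relations and hence extends to a group homomorphism Ŵ⁺ → GL₂(ℂ). Each of the resulting 2m − 2 two-dimensional complex representations of Ŵ⁺ is irreducible, and they are pairwise non-isomorphic. -/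

import Mathlib

/-- Generators of the double covering of `W = ℤ₂ × D_{2m}`: the central element `z`
and the lifted reflections `s₀`, `s₁`, `s_m`. -/
inductive Gen : Type
  | z | s0 | s1 | sm
deriving DecidableEq

open FreeGroup

/-- Relators of the positive double covering `Ŵ⁺` of `ℤ₂ × D_{2m}` for even `m`:
`z² = s₀² = s₁² = s_m² = 1`, `(s₀s₁)² = (s₀s_m)² = (s₁s_m)^m = z`,
and `z` commutes with the generators. -/
def relsEvenPos (m : ℕ) : Set (FreeGroup Gen) :=
  { (of Gen.z) ^ 2, (of Gen.s0) ^ 2, (of Gen.s1) ^ 2, (of Gen.sm) ^ 2,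
    (of Gen.s0 * of Gen.s1) ^ 2 * (of Gen.z)⁻¹,
    (of Gen.s0 * of Gen.sm) ^ 2 * (of Gen.z)⁻¹,
    (of Gen.s1 * of Gen.sm) ^ m * (of Gen.z)⁻¹,
    of Gen.z * of Gen.s0 * (of Gen.z)⁻¹ * (of Gen.s0)⁻¹,
    of Gen.z * of Gen.s1 * (of Gen.z)⁻¹ * (of Gen.s1)⁻¹,
    of Gen.z * of Gen.sm * (of Gen.z)⁻¹ * (of Gen.sm)⁻¹ }

/-- `ζ = exp(πi/m)`. -/
noncomputable def zeta (m : ℕ) : ℂ := Complex.exp (Real.pi * Complex.I / m)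

/-- The matrix assignment `Y_j(δ)` on the generators, for even `m`:
`z ↦ (−1)^j·I₂`, `s₀ ↦ diag(δ, (−1)^j δ)`, `s₁ ↦ [[0, ζ^j], [ζ^{−j}, 0]]`,
`s_m ↦ [[0,1],[1,0]]`. -/
noncomputable def assign (m : ℕ) : ℂ × ℕ → Gen → Matrix (Fin 2) (Fin 2) ℂ
  | (_, j), Gen.z => ((-1 : ℂ) ^ j) • (1 : Matrix (Fin 2) (Fin 2) ℂ)
  | (δ, j), Gen.s0 => !![δ, 0; 0, (-1 : ℂ) ^ j * δ]
  | (_, j), Gen.s1 => !![0, zeta m ^ j; (zeta m ^ j)⁻¹, 0]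
  | _, Gen.sm => !![0, 1; 1, 0]

/-- The admissible parameters: `δ ∈ {1, −1}` and `1 ≤ j ≤ m − 1`. -/
def ValidParam (m : ℕ) : ℂ × ℕ → Prop
  | (δ, j) => (δ = 1 ∨ δ = -1) ∧ 1 ≤ j ∧ j ≤ m - 1

/-- `φ` takes the prescribed matrix values on the generators. -/
def Extends {rels : Set (FreeGroup Gen)}
    (φ : PresentedGroup rels →* (Matrix (Fin 2) (Fin 2) ℂ)ˣ)
    (M : Gen → Matrix (Fin 2) (Fin 2) ℂ) : Prop :=
  ∀ g : Gen, (φ (PresentedGroup.of g) : Matrix (Fin 2) (Fin 2) ℂ) = M g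

/-- Irreducibility of a two-dimensional matrix representation: the only invariant
subspaces of `ℂ²` are `⊥` and `⊤`. -/
def IrredMat {G : Type*} [Group G] (φ : G →* (Matrix (Fin 2) (Fin 2) ℂ)ˣ) : Prop :=
  ∀ U : Submodule ℂ (Fin 2 → ℂ),
    (∀ g : G, ∀ x ∈ U, ((φ g : Matrix (Fin 2) (Fin 2) ℂ)).mulVec x ∈ U) → U = ⊥ ∨ U = ⊤

/-- Isomorphism of matrix representations: simultaneous conjugation. -/
def MatIso {G : Type*} [Group G] (φ ψ : G →* (Matrix (Fin 2) (Fin 2) ℂ)ˣ) : Prop :=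
  ∃ S : (Matrix (Fin 2) (Fin 2) ℂ)ˣ, ∀ g : G, φ g = S * ψ g * S⁻¹

/-!
Every generator matrix is an involution, `z` goes to a scalar, and `s₁s_m` goes to
`diag(ζ^j, ζ^{-j})`; since `ζ^m = -1` the defining relations follow by direct computation.
As `ζ` is a primitive `2m`-th root of unity, `ζ^j ≠ ζ^{-j}` for `0 < j < m`, so the only
lines invariant under `s₁s_m` are the coordinate axes, which `s_m` swaps: the representation
is irreducible. The trace `ζ^j + ζ^{-j}` of `s₁s_m` determines `j`; for fixed `j` the traces
`δ(1 + (-1)^j)` of `s₀` and `δ(ζ^j + (-1)^j ζ^{-j})` of `s₀s₁s_m` cannot both vanish, so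
they determine `δ`.
-/

open Matrix

theorem zeta_ne_zero (m : ℕ) : zeta m ≠ 0 := Complex.exp_ne_zero _

theorem isPrimitiveRoot_zeta {m : ℕ} (hm : m ≠ 0) : IsPrimitiveRoot (zeta m) (2 * m) := by
  convert Complex.isPrimitiveRoot_exp (2 * m) (by positivity) using 2
  rw [zeta, Nat.cast_mul, Nat.cast_two, mul_assoc, mul_div_mul_left _ _ two_ne_zero]

theorem zeta_pow_self {m : ℕ} (hm : m ≠ 0) : zeta m ^ m = -1 := by
  rw [zeta, ← Complex.exp_nat_mul, mul_div_cancel₀ _ (Nat.cast_ne_zero.mpr hm),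
    Complex.exp_pi_mul_I]

theorem zeta_pow_ne_inv_zeta_pow {m i j : ℕ} (hi : 0 < i) (him : i < m) (hj : 0 < j)
    (hjm : j < m) : zeta m ^ i ≠ (zeta m ^ j)⁻¹ := by
  intro h
  have hdvd : 2 * m ∣ i + j := (isPrimitiveRoot_zeta (by omega)).dvd_of_pow_eq_one _ <| by
    rw [pow_add, h, inv_mul_cancel₀ (pow_ne_zero _ (zeta_ne_zero m))]
  have := Nat.le_of_dvd (by omega) hdvd
  omega

theorem eq_or_eq_inv_of_add_inv_eq_add_inv {K : Type*} [Field K] {a b : K} (ha : a ≠ 0)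
    (hb : b ≠ 0) (h : a + a⁻¹ = b + b⁻¹) : a = b ∨ a = b⁻¹ := by
  have : (a - b) * (a - b⁻¹) = 0 := by
    linear_combination a * h + mul_inv_cancel₀ hb - mul_inv_cancel₀ ha
  simpa [sub_eq_zero] using this

theorem eq_of_zeta_pow_add_inv_eq {m i j : ℕ} (hi : 0 < i) (him : i < m) (hj : 0 < j)
    (hjm : j < m) (h : zeta m ^ i + (zeta m ^ i)⁻¹ = zeta m ^ j + (zeta m ^ j)⁻¹) :
    i = j := by
  rcases eq_or_eq_inv_of_add_inv_eq_add_inv (pow_ne_zero _ (zeta_ne_zero m))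
    (pow_ne_zero _ (zeta_ne_zero m)) h with h | h
  · exact (isPrimitiveRoot_zeta (by omega)).pow_inj (by omega) (by omega) h
  · exact absurd h (zeta_pow_ne_inv_zeta_pow hi him hj hjm)

section assign

variable (m : ℕ) (δ : ℂ) (j : ℕ)

theorem assign_z : assign m (δ, j) .z = (-1 : ℂ) ^ j • 1 := rfl

theorem assign_sm : assign m (δ, j) .sm = !![0, 1; 1, 0] := rfl

theorem assign_s0 : assign m (δ, j) .s0 = diagonal ![δ, (-1) ^ j * δ] := by
  ext i k; fin_cases i <;> fin_cases k <;> simp [assign]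

theorem assign_s1_mul_sm :
    assign m (δ, j) .s1 * assign m (δ, j) .sm = diagonal ![zeta m ^ j, (zeta m ^ j)⁻¹] := by
  ext i k; fin_cases i <;> fin_cases k <;> simp [assign]

theorem commute_assign_z (g : Gen) : Commute (assign m (δ, j) .z) (assign m (δ, j) g) :=
  (Commute.one_left _).smul_left _

variable {δ}

theorem assign_sq (hδ : δ ^ 2 = 1) (g : Gen) : assign m (δ, j) g ^ 2 = 1 := by
  have hε : ((-1 : ℂ) ^ j) ^ 2 = 1 := by
    rw [← pow_mul, mul_comm, pow_mul, neg_one_sq, one_pow]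
  have ha := pow_ne_zero j (zeta_ne_zero m)
  cases g <;> ext i k <;> fin_cases i <;> fin_cases k <;> simp [assign, sq, ha]
  · linear_combination hε
  · linear_combination hε
  · linear_combination hδ
  · linear_combination δ ^ 2 * hε + hδ

theorem assign_s0_mul_s1_sq (hδ : δ ^ 2 = 1) :
    (assign m (δ, j) .s0 * assign m (δ, j) .s1) ^ 2 = assign m (δ, j) .z := by
  have ha := pow_ne_zero j (zeta_ne_zero m)
  ext i k; fin_cases i <;> fin_cases k <;> simp [assign, sq] <;>
    linear_combination (-1) ^ j * δ ^ 2 * mul_inv_cancel₀ ha + (-1) ^ j * hδ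

theorem assign_s0_mul_sm_sq (hδ : δ ^ 2 = 1) :
    (assign m (δ, j) .s0 * assign m (δ, j) .sm) ^ 2 = assign m (δ, j) .z := by
  ext i k; fin_cases i <;> fin_cases k <;> simp [assign, sq] <;> linear_combination (-1) ^ j * hδ

theorem assign_s1_mul_sm_pow (hm : m ≠ 0) :
    (assign m (δ, j) .s1 * assign m (δ, j) .sm) ^ m = assign m (δ, j) .z := by
  have hpow : (zeta m ^ j) ^ m = (-1) ^ j := by
    rw [← pow_mul, mul_comm, pow_mul, zeta_pow_self hm]
  rw [assign_s1_mul_sm, diagonal_pow, assign_z, smul_one_eq_diagonal]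
  congr 1; ext i; fin_cases i
  exacts [hpow, (inv_pow _ _).trans (by rw [hpow, ← inv_pow, inv_neg_one])]

end assign

theorem lift_eq_one_of_mem_relsEvenPos {G : Type*} [Group G] {m : ℕ} {F : Gen → G}
    (hsq : ∀ g, F g ^ 2 = 1) (h01 : (F .s0 * F .s1) ^ 2 = F .z)
    (h0m : (F .s0 * F .sm) ^ 2 = F .z) (h1m : (F .s1 * F .sm) ^ m = F .z)
    (hz : ∀ g, Commute (F .z) (F g)) {r : FreeGroup Gen} (hr : r ∈ relsEvenPos m) :
    FreeGroup.lift F r = 1 := by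
  simp only [relsEvenPos, Set.mem_insert_iff, Set.mem_singleton_iff] at hr
  rcases hr with rfl | rfl | rfl | rfl | rfl | rfl | rfl | rfl | rfl | rfl <;>
    simp [hsq, h01, h0m, h1m, ← commutatorElement_def, commutatorElement_eq_one_iff_commute, hz]

noncomputable def assignUnit (m : ℕ) {δ : ℂ} (j : ℕ) (hδ : δ ^ 2 = 1) (g : Gen) :
    (Matrix (Fin 2) (Fin 2) ℂ)ˣ where
  val := assign m (δ, j) g
  inv := assign m (δ, j) g
  val_inv := by rw [← sq, assign_sq m j hδ]
  inv_val := by rw [← sq, assign_sq m j hδ]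

@[simp]
theorem coe_assignUnit (m : ℕ) {δ : ℂ} (j : ℕ) (hδ : δ ^ 2 = 1) (g : Gen) :
    (assignUnit m j hδ g : Matrix (Fin 2) (Fin 2) ℂ) = assign m (δ, j) g := rfl

theorem exists_extends_assign {m : ℕ} (hm : m ≠ 0) {δ : ℂ} (hδ : δ ^ 2 = 1) (j : ℕ) :
    ∃ φ : PresentedGroup (relsEvenPos m) →* (Matrix (Fin 2) (Fin 2) ℂ)ˣ,
      Extends φ (assign m (δ, j)) := by
  have hrels (r) (hr : r ∈ relsEvenPos m) : FreeGroup.lift (assignUnit m j hδ) r = 1 :=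
    lift_eq_one_of_mem_relsEvenPos (fun g => Units.ext <| by simpa using assign_sq m j hδ g)
      (Units.ext <| by simpa using assign_s0_mul_s1_sq m j hδ)
      (Units.ext <| by simpa using assign_s0_mul_sm_sq m j hδ)
      (Units.ext <| by simpa using assign_s1_mul_sm_pow m j hm)
      (fun g => Units.ext <| by simpa using (commute_assign_z m δ j g).eq) hr
  exact ⟨PresentedGroup.toGroup hrels, fun g => by simp⟩

theorem eq_bot_or_eq_top_of_mulVec_mem {K : Type*} [Field K] {a b : K} (hab : a ≠ b)
    {U : Submodule K (Fin 2 → K)} (hD : ∀ x ∈ U, diagonal ![a, b] *ᵥ x ∈ U)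
    (hS : ∀ x ∈ U, !![0, 1; 1, 0] *ᵥ x ∈ U) : U = ⊥ ∨ U = ⊤ := by
  refine or_iff_not_imp_left.mpr fun hU => ?_
  obtain ⟨x, hx, hx0⟩ := (Submodule.ne_bot_iff U).mp hU
  obtain ⟨y, hy, hy0⟩ : ∃ y ∈ U, y 0 ≠ 0 := by
    by_cases h : x 0 = 0
    · refine ⟨_, hS x hx, ?_⟩
      contrapose! hx0
      ext i; fin_cases i <;> simp_all [mulVec, dotProduct]
    · exact ⟨x, hx, h⟩
  have he0 : Pi.single 0 1 ∈ U := by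
    have hmem := U.sub_mem (hD y hy) (U.smul_mem b hy)
    have : diagonal ![a, b] *ᵥ y - b • y = ((a - b) * y 0) • Pi.single 0 1 := by
      ext i; fin_cases i <;> simp; ring
    rwa [this, U.smul_mem_iff (mul_ne_zero (sub_ne_zero.mpr hab) hy0)] at hmem
  have he1 : Pi.single 1 1 ∈ U := by
    convert hS _ he0 using 1
    ext i; fin_cases i <;> simp
  rw [eq_top_iff, ← (Pi.basisFun K (Fin 2)).span_eq, Submodule.span_le]
  rintro _ ⟨i, rfl⟩
  fin_cases i <;> simpa

theorem irredMat_of_extends_assign {rels : Set (FreeGroup Gen)} {m j : ℕ} (hj : 0 < j)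
    (hjm : j < m) {δ : ℂ} {φ : PresentedGroup rels →* (Matrix (Fin 2) (Fin 2) ℂ)ˣ}
    (hφ : Extends φ (assign m (δ, j))) : IrredMat φ := fun U hU =>
  eq_bot_or_eq_top_of_mulVec_mem (zeta_pow_ne_inv_zeta_pow hj hjm hj hjm)
    (fun x hx => by
      simpa only [_root_.map_mul, Units.val_mul, hφ .s1, hφ .sm, assign_s1_mul_sm]
        using hU (.of .s1 * .of .sm) x hx)
    (fun x hx => by simpa only [hφ .sm, assign_sm] using hU (.of .sm) x hx)

theorem MatIso.trace_eq {G : Type*} [Group G] {φ ψ : G →* (Matrix (Fin 2) (Fin 2) ℂ)ˣ}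
    (h : MatIso φ ψ) (g : G) :
    trace (φ g : Matrix (Fin 2) (Fin 2) ℂ) = trace (ψ g : Matrix (Fin 2) (Fin 2) ℂ) := by
  obtain ⟨S, hS⟩ := h
  rw [hS, Units.val_mul, Units.val_mul, trace_units_conj]

section trace

variable (m : ℕ) (δ : ℂ) (j : ℕ)

theorem trace_assign_s0 : trace (assign m (δ, j) .s0) = δ * (1 + (-1) ^ j) := by
  simp [assign_s0, trace_diagonal]; ring

theorem trace_assign_s1_mul_sm :
    trace (assign m (δ, j) .s1 * assign m (δ, j) .sm) = zeta m ^ j + (zeta m ^ j)⁻¹ := by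
  simp [assign_s1_mul_sm]

theorem trace_assign_s0_mul_s1_mul_sm :
    trace (assign m (δ, j) .s0 * (assign m (δ, j) .s1 * assign m (δ, j) .sm)) =
      δ * (zeta m ^ j + (-1) ^ j * (zeta m ^ j)⁻¹) := by
  simp [assign_s0, assign_s1_mul_sm]; ring

end trace

theorem not_matIso_of_extends_assign {rels : Set (FreeGroup Gen)} {m : ℕ} {δ δ' : ℂ}
    {j j' : ℕ} (hj : 0 < j) (hjm : j < m) (hj' : 0 < j') (hjm' : j' < m)
    (hne : (δ, j) ≠ (δ', j')) {φ ψ : PresentedGroup rels →* (Matrix (Fin 2) (Fin 2) ℂ)ˣ}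
    (hφ : Extends φ (assign m (δ, j))) (hψ : Extends ψ (assign m (δ', j'))) :
    ¬ MatIso φ ψ := by
  intro h
  have h1 := h.trace_eq (.of .s1 * .of .sm)
  simp only [_root_.map_mul, Units.val_mul, hφ .s1, hφ .sm, hψ .s1, hψ .sm,
    trace_assign_s1_mul_sm] at h1
  obtain rfl := eq_of_zeta_pow_add_inv_eq hj hjm hj' hjm' h1
  have h0 := h.trace_eq (.of .s0)
  have h2 := h.trace_eq (.of .s0 * (.of .s1 * .of .sm))
  simp only [_root_.map_mul, Units.val_mul, hφ .s0, hφ .s1, hφ .sm, hψ .s0, hψ .s1, hψ .sm,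
    trace_assign_s0, trace_assign_s0_mul_s1_mul_sm] at h0 h2
  -- `δ ≠ δ'` forces `(-1) ^ j = -1`, and then `ζ ^ j = ζ ^ (-j)`
  have hε : 1 + (-1 : ℂ) ^ j = 0 := by
    by_contra hε
    exact hne (by rw [mul_right_cancel₀ hε h0])
  have hζ : zeta m ^ j + (-1) ^ j * (zeta m ^ j)⁻¹ = 0 := by
    by_contra hζ
    exact hne (by rw [mul_right_cancel₀ hζ h2])
  exact zeta_pow_ne_inv_zeta_pow hj hjm hj hjm (by linear_combination hζ - (zeta m ^ j)⁻¹ * hε)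

theorem WposEven_two_dim_irreps_general (m : ℕ) :
    (∀ c, ValidParam m c →
      ∃ φ : PresentedGroup (relsEvenPos m) →* (Matrix (Fin 2) (Fin 2) ℂ)ˣ,
        Extends φ (assign m c)) ∧
    (∀ c, ValidParam m c →
      ∀ φ : PresentedGroup (relsEvenPos m) →* (Matrix (Fin 2) (Fin 2) ℂ)ˣ,
        Extends φ (assign m c) → IrredMat φ) ∧
    (∀ c c', ValidParam m c → ValidParam m c' → c ≠ c' →
      ∀ φ ψ : PresentedGroup (relsEvenPos m) →* (Matrix (Fin 2) (Fin 2) ℂ)ˣ,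
        Extends φ (assign m c) → Extends ψ (assign m c') → ¬ MatIso φ ψ) := by
  refine ⟨?_, ?_, ?_⟩
  · rintro ⟨δ, j⟩ ⟨hδ, hj, hjm⟩
    exact exists_extends_assign (by omega) (by rcases hδ with rfl | rfl <;> norm_num) j
  · rintro ⟨δ, j⟩ ⟨-, hj, hjm⟩ φ hφ
    exact irredMat_of_extends_assign (by omega) (by omega) hφ
  · rintro ⟨δ, j⟩ ⟨δ', j'⟩ ⟨-, hj, hjm⟩ ⟨-, hj', hjm'⟩ hne φ ψ hφ hψ
    exact not_matIso_of_extends_assign (by omega) (by omega) (by omega) (by omega) hne hφ hψ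

/-- Theorem A.3 of the paper (even case, positive covering), two-dimensional
representations: for each `δ ∈ {1, −1}` and `1 ≤ j ≤ m − 1` the prescribed matrix
assignment respects the defining relations, hence extends to a group homomorphism
`Ŵ⁺ → GL₂(ℂ)`; each of the resulting `2m − 2` representations is irreducible, and
representations with distinct parameters are non-isomorphic. -/
theorem WposEven_two_dim_irreps (m p : ℕ) (hp : 1 ≤ p) (hm : m = 2 * p) :
    (∀ c, ValidParam m c →
      ∃ φ : PresentedGroup (relsEvenPos m) →* (Matrix (Fin 2) (Fin 2) ℂ)ˣ,
        Extends φ (assign m c)) ∧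
    (∀ c, ValidParam m c →
      ∀ φ : PresentedGroup (relsEvenPos m) →* (Matrix (Fin 2) (Fin 2) ℂ)ˣ,
        Extends φ (assign m c) → IrredMat φ) ∧
    (∀ c c', ValidParam m c → ValidParam m c' → c ≠ c' →
      ∀ φ ψ : PresentedGroup (relsEvenPos m) →* (Matrix (Fin 2) (Fin 2) ℂ)ˣ,
        Extends φ (assign m c) → Extends ψ (assign m c') → ¬ MatIso φ ψ) :=
  WposEven_two_dim_irreps_general m
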